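/- Dimension count for spin-1/2 osp(1|2) Gaudin degeneracies: Σ_{l : 2l ∈ {0,...,N}} c^{(N)}_l · (4l+1) = 3^N, where l runs over half-integer steps and c^{(N)}_l = Σ_{k} C(N, 2k-2l) C(2k-2l, k) − Σ_k C(N, 2k-2l+1) C(2k-2l+1, k+1), and the sums over k range so that binomial arguments are valid. -/

import Mathlib

open Finset

private def Dfun (N m : ℕ) : ℤ :=
  ∑ k ∈ Finset.Icc m ((N + m) / 2),
    (Nat.choose N (2 * k - m) * Nat.choose (2 * k - m) k : ℤ)

private def Gfun (N m : ℕ) : ℤ := Dfun N m * (2 * (m : ℤ) + 1)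

private lemma second_sum_eq (N m : ℕ) :
    ∑ k ∈ Finset.Icc m ((N + m - 1) / 2),
        (Nat.choose N (2 * k - m + 1) * Nat.choose (2 * k - m + 1) (k + 1) : ℤ)
      = Dfun N (m + 1) := by
  unfold Dfun
  rcases Nat.eq_zero_or_pos (N + m) with h0 | h0
  · have hN : N = 0 := by omega
    have hm : m = 0 := by omega
    subst hN; subst hm
    decide
  refine Finset.sum_nbij' (fun k => k + 1) (fun k => k - 1) ?_ ?_ ?_ ?_ ?_
  · intro k hk
    simp only [Finset.mem_Icc] at hk ⊢
    omega
  · intro k hk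
    simp only [Finset.mem_Icc] at hk ⊢
    omega
  · intro k hk; omega
  · intro k hk
    simp only [Finset.mem_Icc] at hk
    omega
  · intro k hk
    simp only [Finset.mem_Icc] at hk
    have h1 : 2 * (k + 1) - (m + 1) = 2 * k - m + 1 := by omega
    rw [h1]

private lemma sym_sum (j : ℕ) :
    2 * ∑ k ∈ Finset.Icc ((j + 1) / 2) j, (Nat.choose j k : ℤ)
      = 2 ^ j + (if j % 2 = 0 then (Nat.choose j (j / 2) : ℤ) else 0) := by
  have hrefl : ∑ k ∈ Finset.Icc ((j + 1) / 2) j, (Nat.choose j k : ℤ)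
      = ∑ k ∈ Finset.Icc 0 (j / 2), (Nat.choose j k : ℤ) := by
    refine Finset.sum_nbij' (fun k => j - k) (fun k => j - k) ?_ ?_ ?_ ?_ ?_
    · intro k hk; simp only [Finset.mem_Icc] at hk ⊢; omega
    · intro k hk; simp only [Finset.mem_Icc] at hk ⊢; omega
    · intro k hk; simp only [Finset.mem_Icc] at hk; omega
    · intro k hk; simp only [Finset.mem_Icc] at hk; omega
    · intro k hk
      simp only [Finset.mem_Icc] at hk
      rw [Nat.choose_symm hk.2]
  have htot : ∑ k ∈ Finset.Ico 0 (j + 1), (Nat.choose j k : ℤ) = 2 ^ j := by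
    rw [← Finset.range_eq_Ico]
    exact_mod_cast congrArg (Nat.cast : ℕ → ℤ) (Nat.sum_range_choose j)
  rw [two_mul]
  nth_rewrite 1 [hrefl]
  by_cases hmod : j % 2 = 0
  · have h1 : (j + 1) / 2 = j / 2 := by omega
    have hA : ∑ k ∈ Finset.Icc 0 (j / 2), (Nat.choose j k : ℤ)
        = ∑ k ∈ Finset.Ico 0 (j / 2), (Nat.choose j k : ℤ) + (Nat.choose j (j / 2) : ℤ) := by
      rw [← Finset.Ico_add_one_right_eq_Icc]
      exact Finset.sum_Ico_succ_top (by omega) _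
    have hB : ∑ k ∈ Finset.Icc ((j + 1) / 2) j, (Nat.choose j k : ℤ)
        = ∑ k ∈ Finset.Ico (j / 2) (j + 1), (Nat.choose j k : ℤ) := by
      rw [h1, ← Finset.Ico_add_one_right_eq_Icc]
    have hsplit := Finset.sum_Ico_consecutive (fun k => (Nat.choose j k : ℤ))
      (Nat.zero_le (j / 2)) (by omega : j / 2 ≤ j + 1)
    rw [hA, hB, if_pos hmod]
    linarith [hsplit, htot]
  · have h1 : (j + 1) / 2 = j / 2 + 1 := by omega
    have hA : ∑ k ∈ Finset.Icc 0 (j / 2), (Nat.choose j k : ℤ)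
        = ∑ k ∈ Finset.Ico 0 (j / 2 + 1), (Nat.choose j k : ℤ) := by
      rw [← Finset.Ico_add_one_right_eq_Icc]
    have hB : ∑ k ∈ Finset.Icc ((j + 1) / 2) j, (Nat.choose j k : ℤ)
        = ∑ k ∈ Finset.Ico (j / 2 + 1) (j + 1), (Nat.choose j k : ℤ) := by
      rw [h1, ← Finset.Ico_add_one_right_eq_Icc]
    have hsplit := Finset.sum_Ico_consecutive (fun k => (Nat.choose j k : ℤ))
      (Nat.zero_le (j / 2 + 1)) (by omega : j / 2 + 1 ≤ j + 1)
    rw [hA, hB, if_neg hmod]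
    linarith [hsplit, htot]

private lemma swap_sum (N : ℕ) :
    ∑ m ∈ Finset.range (N + 1), Dfun N m
      = ∑ j ∈ Finset.range (N + 1),
          (Nat.choose N j : ℤ) * ∑ k ∈ Finset.Icc ((j + 1) / 2) j, (Nat.choose j k : ℤ) := by
  have hR : ∀ j ∈ Finset.range (N + 1),
      (Nat.choose N j : ℤ) * ∑ k ∈ Finset.Icc ((j + 1) / 2) j, (Nat.choose j k : ℤ)
        = ∑ k ∈ Finset.Icc ((j + 1) / 2) j, (Nat.choose N j * Nat.choose j k : ℤ) := by
    intro j _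
    rw [Finset.mul_sum]
    try exact Finset.sum_congr rfl fun k _ => by push_cast; try ring
  rw [Finset.sum_congr rfl hR]
  unfold Dfun
  rw [Finset.sum_sigma', Finset.sum_sigma']
  refine Finset.sum_nbij' (fun p => ⟨2 * p.2 - p.1, p.2⟩) (fun p => ⟨2 * p.2 - p.1, p.2⟩)
    ?_ ?_ ?_ ?_ ?_
  · rintro ⟨m, k⟩ hp
    simp only [Finset.mem_sigma, Finset.mem_range, Finset.mem_Icc] at hp ⊢
    omega
  · rintro ⟨j, k⟩ hp
    simp only [Finset.mem_sigma, Finset.mem_range, Finset.mem_Icc] at hp ⊢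
    omega
  · rintro ⟨m, k⟩ hp
    simp only [Finset.mem_sigma, Finset.mem_range, Finset.mem_Icc] at hp
    have h2 : 2 * k - (2 * k - m) = m := by omega
    simp [h2]
  · rintro ⟨j, k⟩ hp
    simp only [Finset.mem_sigma, Finset.mem_range, Finset.mem_Icc] at hp
    have h2 : 2 * k - (2 * k - j) = j := by omega
    simp [h2]
  · rintro ⟨m, k⟩ hp
    simp only [Finset.mem_sigma, Finset.mem_range, Finset.mem_Icc] at hp
    try dsimp only
    try push_cast
    try ring

private lemma D0_eq (N : ℕ) :
    Dfun N 0
      = ∑ j ∈ Finset.range (N + 1),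
          (Nat.choose N j : ℤ) * (if j % 2 = 0 then (Nat.choose j (j / 2) : ℤ) else 0) := by
  have hR : ∀ j ∈ Finset.range (N + 1),
      (Nat.choose N j : ℤ) * (if j % 2 = 0 then (Nat.choose j (j / 2) : ℤ) else 0)
        = if j % 2 = 0 then (Nat.choose N j * Nat.choose j (j / 2) : ℤ) else 0 := by
    intro j _
    by_cases h : j % 2 = 0
    · rw [if_pos h, if_pos h]; try push_cast; try ring
    · rw [if_neg h, if_neg h, mul_zero]
  rw [Finset.sum_congr rfl hR, ← Finset.sum_filter]
  unfold Dfun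
  refine Finset.sum_nbij' (fun k => 2 * k) (fun j => j / 2) ?_ ?_ ?_ ?_ ?_
  · intro k hk
    simp only [Finset.mem_Icc] at hk
    simp only [Finset.mem_filter, Finset.mem_range]
    omega
  · intro j hj
    simp only [Finset.mem_filter, Finset.mem_range] at hj
    simp only [Finset.mem_Icc]
    omega
  · intro k hk; omega
  · intro j hj
    simp only [Finset.mem_filter, Finset.mem_range] at hj
    omega
  · intro k hk
    simp only [Finset.mem_Icc] at hk
    have h1 : 2 * k - 0 = 2 * k := by omega
    have h2 : 2 * k / 2 = k := by omega
    rw [h1, h2]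

private lemma final_sum (N : ℕ) :
    2 * (∑ j ∈ Finset.range (N + 1),
          (Nat.choose N j : ℤ) * ∑ k ∈ Finset.Icc ((j + 1) / 2) j, (Nat.choose j k : ℤ))
      - ∑ j ∈ Finset.range (N + 1),
          (Nat.choose N j : ℤ) * (if j % 2 = 0 then (Nat.choose j (j / 2) : ℤ) else 0)
    = 3 ^ N := by
  rw [Finset.mul_sum, ← Finset.sum_sub_distrib]
  have hterm : ∀ j ∈ Finset.range (N + 1),
      2 * ((Nat.choose N j : ℤ) * ∑ k ∈ Finset.Icc ((j + 1) / 2) j, (Nat.choose j k : ℤ))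
        - (Nat.choose N j : ℤ) * (if j % 2 = 0 then (Nat.choose j (j / 2) : ℤ) else 0)
      = (Nat.choose N j : ℤ) * 2 ^ j := by
    intro j _
    have h := sym_sum j
    calc 2 * ((Nat.choose N j : ℤ) * ∑ k ∈ Finset.Icc ((j + 1) / 2) j, (Nat.choose j k : ℤ))
          - (Nat.choose N j : ℤ) * (if j % 2 = 0 then (Nat.choose j (j / 2) : ℤ) else 0)
        = (Nat.choose N j : ℤ)
            * (2 * ∑ k ∈ Finset.Icc ((j + 1) / 2) j, (Nat.choose j k : ℤ))
          - (Nat.choose N j : ℤ) * (if j % 2 = 0 then (Nat.choose j (j / 2) : ℤ) else 0) := by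
          ring
      _ = (Nat.choose N j : ℤ) * (2 ^ j + (if j % 2 = 0 then (Nat.choose j (j / 2) : ℤ) else 0))
          - (Nat.choose N j : ℤ) * (if j % 2 = 0 then (Nat.choose j (j / 2) : ℤ) else 0) := by
          rw [h]
      _ = (Nat.choose N j : ℤ) * 2 ^ j := by ring
  rw [Finset.sum_congr rfl hterm]
  have h := add_pow (2 : ℤ) 1 N
  norm_num at h
  rw [h]
  exact Finset.sum_congr rfl fun j _ => mul_comm _ _

/-- Dimension count for the spin-`1/2` `osp(1|2)` Gaudin degeneracies: writing
`l = m/2` with `m = 0,…,N`, the multiplicities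
`c^{(N)}_{m/2} = Σ_{k=m}^{⌊(N+m)/2⌋} C(N,2k-m) C(2k-m,k)
               − Σ_{k=m}^{⌊(N+m-1)/2⌋} C(N,2k-m+1) C(2k-m+1,k+1)`
weighted by the dimensions `4l + 1 = 2m + 1` add up to the total dimension `3^N`:
`Σ_{m=0}^{N} c^{(N)}_{m/2} (2m+1) = 3^N`. -/
theorem stmt13 (N : ℕ) :
    ∑ m ∈ Finset.range (N + 1),
        ((∑ k ∈ Finset.Icc m ((N + m) / 2),
              (Nat.choose N (2 * k - m) * Nat.choose (2 * k - m) k : ℤ))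
          - ∑ k ∈ Finset.Icc m ((N + m - 1) / 2),
              (Nat.choose N (2 * k - m + 1) * Nat.choose (2 * k - m + 1) (k + 1) : ℤ))
          * (2 * m + 1) = 3 ^ N := by
  have hDtop : Dfun N (N + 1) = 0 := by
    unfold Dfun
    rw [Finset.Icc_eq_empty (by omega)]
    simp
  have hstep : ∀ m ∈ Finset.range (N + 1),
      ((∑ k ∈ Finset.Icc m ((N + m) / 2),
              (Nat.choose N (2 * k - m) * Nat.choose (2 * k - m) k : ℤ))
          - ∑ k ∈ Finset.Icc m ((N + m - 1) / 2),
              (Nat.choose N (2 * k - m + 1) * Nat.choose (2 * k - m + 1) (k + 1) : ℤ))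
          * (2 * (m : ℤ) + 1)
        = (Gfun N m - Gfun N (m + 1)) + 2 * Dfun N (m + 1) := by
    intro m _
    rw [second_sum_eq]
    have hfirst : (∑ k ∈ Finset.Icc m ((N + m) / 2),
        (Nat.choose N (2 * k - m) * Nat.choose (2 * k - m) k : ℤ)) = Dfun N m := rfl
    rw [hfirst]
    unfold Gfun
    push_cast
    ring
  rw [Finset.sum_congr rfl hstep, Finset.sum_add_distrib,
    Finset.sum_range_sub' (Gfun N) (N + 1)]
  have hshift : ∑ m ∈ Finset.range (N + 1), 2 * Dfun N (m + 1)
      = 2 * (∑ m ∈ Finset.range (N + 1), Dfun N m - Dfun N 0) := by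
    rw [← Finset.mul_sum]
    congr 1
    have := Finset.sum_range_succ' (Dfun N) (N + 1)
    rw [Finset.sum_range_succ (Dfun N) (N + 1), hDtop] at this
    linarith
  rw [hshift]
  have hG0 : Gfun N 0 = Dfun N 0 := by unfold Gfun; push_cast; ring
  have hGtop : Gfun N (N + 1) = 0 := by unfold Gfun; rw [hDtop]; ring
  rw [hG0, hGtop, swap_sum, D0_eq]
  linarith [final_sum N]
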